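/- Let 0 < p < 1 and n ≥ 2 be an integer, and set f_n(x,y) = 2^{n(2/p−2)} (D_{2^{n+1}}(x) − D_{2^n}(x)) (D_{2^{n+1}}(y) − D_{2^n}(y)). Then for odd m, l with 2^n < m, l < 2^{n+1} and all (x,y) ∈ (G∖I_1)², we have |S_{m,l}f_n(x,y)| = 2^{n(2/p−2)}, and consequently ‖S_{m,l}f_n‖_{weak-L^p} ≥ c_p 2^{n(2/p−2)}. -/

import Mathlib

open MeasureTheory Filter Topology
open scoped ENNReal NNReal BigOperators

noncomputable section

instance : TopologicalSpace (ZMod 2) := ⊥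
instance : DiscreteTopology (ZMod 2) := ⟨rfl⟩
instance : MeasurableSpace (ZMod 2) := ⊤
instance : BorelSpace (ZMod 2) := ⟨borel_eq_top_of_discrete.symm⟩

/-- The Walsh group: countable product of `ZMod 2`. -/
abbrev WG : Type := ℕ → ZMod 2

/-- The normalized Haar (= product) measure on the Walsh group. -/
def μG : Measure WG := Measure.addHaarMeasure (⊤ : TopologicalSpace.PositiveCompacts WG)

/-- Haar measure on `G × G`. -/
def μ2 : Measure (WG × WG) := μG.prod μG

/-- Rademacher function. -/
def rade (k : ℕ) (x : WG) : ℝ := (-1 : ℝ) ^ (x k).val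

/-- Walsh–Paley function. -/
def walsh (n : ℕ) (x : WG) : ℝ :=
  ∏ k ∈ Finset.range n, if n.testBit k then rade k x else 1

/-- Walsh–Dirichlet kernel. -/
def Dir (n : ℕ) (x : WG) : ℝ := ∑ k ∈ Finset.range n, walsh k x

/-- Dyadic interval of rank `n` around `0`. -/
def Iset (n : ℕ) : Set WG := {x | ∀ i < n, x i = 0}

/-- Dyadic interval of rank `n` around `c`. -/
def IsetC (n : ℕ) (c : WG) : Set WG := {x | ∀ i < n, x i = c i}

/-- `(i,j)`-th Walsh–Fourier coefficient of an integrable function on `G²`. -/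
def fhat (f : WG × WG → ℝ) (i j : ℕ) : ℝ :=
  ∫ z, f z * walsh i z.1 * walsh j z.2 ∂μ2

/-- Rectangular partial sum of the 2D Walsh–Fourier series of a function. -/
def Spart (M N : ℕ) (f : WG × WG → ℝ) (z : WG × WG) : ℝ :=
  ∑ i ∈ Finset.range M, ∑ j ∈ Finset.range N, fhat f i j * walsh i z.1 * walsh j z.2

/-- `p`-atom on `G²`. -/
def IsPAtom (p : ℝ) (a : WG × WG → ℝ) : Prop :=
  Measurable a ∧ ∃ (n : ℕ) (c d : WG),
    (∀ z, z ∉ (IsetC n c) ×ˢ (IsetC n d) → a z = 0) ∧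
    (∫ z in (IsetC n c) ×ˢ (IsetC n d), a z ∂μ2) = 0 ∧
    ∀ z, |a z| ≤ (μ2 ((IsetC n c) ×ˢ (IsetC n d))).toReal ^ (-(1:ℝ)/p)

/-- The dyadic filtration on `G²`. -/
def dyadicF : Filtration ℕ (inferInstance : MeasurableSpace (WG × WG)) where
  seq n := MeasurableSpace.comap
      (fun z : WG × WG => ((fun i : Fin n => z.1 i), (fun i : Fin n => z.2 i))) inferInstance
  mono' := by
    intro n m hnm
    have : (fun z : WG × WG => ((fun i : Fin n => z.1 i), (fun i : Fin n => z.2 i)))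
        = (fun w : (Fin m → ZMod 2) × (Fin m → ZMod 2) =>
            ((fun i : Fin n => w.1 (Fin.castLE hnm i)), (fun i : Fin n => w.2 (Fin.castLE hnm i))))
          ∘ (fun z : WG × WG => ((fun i : Fin m => z.1 i), (fun i : Fin m => z.2 i))) := rfl
    simp only []
    rw [this, ← MeasurableSpace.comap_comp]
    exact MeasurableSpace.comap_mono (Measurable.comap_le (by fun_prop))
  le' := by
    intro n
    exact Measurable.comap_le (by fun_prop)

/-- The `H_p` quasi-norm of a sequence of functions (martingale) on `G²`. -/
def HpNorm (p : ℝ) (f : ℕ → WG × WG → ℝ) : ℝ≥0∞ :=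
  (∫⁻ z, (⨆ n, (‖f n z‖₊ : ℝ≥0∞)) ^ p ∂μ2) ^ (1 / p)

/-- Membership in the dyadic martingale Hardy space `H_p(G²)`. -/
def MemHp (p : ℝ) (f : ℕ → WG × WG → ℝ) : Prop :=
  Martingale f dyadicF μ2 ∧ HpNorm p f < ⊤

/-- Walsh–Fourier coefficients of a martingale. -/
def fhatM (f : ℕ → WG × WG → ℝ) (i j : ℕ) : ℝ :=
  limUnder atTop (fun n => ∫ z, f n z * walsh i z.1 * walsh j z.2 ∂μ2)

/-- Rectangular partial sums of a martingale. -/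
def SpartM (M N : ℕ) (f : ℕ → WG × WG → ℝ) (z : WG × WG) : ℝ :=
  ∑ i ∈ Finset.range M, ∑ j ∈ Finset.range N, fhatM f i j * walsh i z.1 * walsh j z.2

/-- weak-`L^p` quasi-norm on `G²`. -/
def wLp (p : ℝ) (g : WG × WG → ℝ) : ℝ≥0∞ :=
  ⨆ t : ℝ≥0, (t : ℝ≥0∞) * (μ2 {z | (t : ℝ) < |g z|}) ^ (1 / p)

/-- `L^p` quasi-norm to the `p`-th power, `‖g‖_p^p`, as an extended real. -/
def LpP (p : ℝ) (g : WG × WG → ℝ) : ℝ≥0∞ := ∫⁻ z, (‖g z‖₊ : ℝ≥0∞) ^ p ∂μ2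


/-! ### Auxiliary lemmas -/

instance : IsProbabilityMeasure μG := by
  constructor
  have := MeasureTheory.Measure.addHaarMeasure_self
    (K₀ := (⊤ : TopologicalSpace.PositiveCompacts WG))
  rwa [TopologicalSpace.PositiveCompacts.coe_top] at this

instance : μG.IsAddLeftInvariant := by unfold μG; infer_instance
instance : μG.IsAddRightInvariant := by unfold μG; infer_instance
instance : IsProbabilityMeasure μ2 := by unfold μ2; infer_instance

lemma rade_meas (k : ℕ) : Measurable (rade k) :=
  ((measurable_of_countable (fun v : ZMod 2 => ((-1:ℝ)) ^ v.val)).comp (measurable_pi_apply k))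

lemma abs_rade (k : ℕ) (x : WG) : |rade k x| = 1 := by
  unfold rade; rw [abs_pow, abs_neg, abs_one, one_pow]

lemma rade_sq (k : ℕ) (x : WG) : rade k x * rade k x = 1 := by
  unfold rade; rw [← pow_add]
  exact Even.neg_one_pow ⟨(x k).val, rfl⟩

lemma walsh_eq_prod (n N : ℕ) (h : n < 2 ^ N) (x : WG) :
    walsh n x = ∏ k ∈ Finset.range N, if n.testBit k then rade k x else 1 := by
  rcases le_total n N with hnN | hNn
  · unfold walsh
    rw [← Finset.prod_range_mul_prod_Ico _ hnN]
    have : ∀ k ∈ Finset.Ico n N, (if n.testBit k then rade k x else 1) = 1 := by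
      intro k hk
      simp only [Finset.mem_Ico] at hk
      rw [Nat.testBit_eq_false_of_lt
        (lt_of_lt_of_le (Nat.lt_two_pow_self (n := n)) (Nat.pow_le_pow_right (by norm_num) hk.1))]
      simp
    rw [Finset.prod_congr rfl this]; simp
  · unfold walsh
    rw [← Finset.prod_range_mul_prod_Ico _ hNn]
    have : ∀ k ∈ Finset.Ico N n, (if n.testBit k then rade k x else 1) = 1 := by
      intro k hk
      simp only [Finset.mem_Ico] at hk
      rw [Nat.testBit_eq_false_of_lt
        (lt_of_lt_of_le h (Nat.pow_le_pow_right (by norm_num) hk.1))]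
      simp
    rw [Finset.prod_congr rfl this]; simp

lemma walsh_zero (x : WG) : walsh 0 x = 1 := by simp [walsh]

lemma abs_walsh (n : ℕ) (x : WG) : |walsh n x| = 1 := by
  unfold walsh
  rw [Finset.abs_prod]
  apply Finset.prod_eq_one
  intro k _
  split
  · exact abs_rade k x
  · exact abs_one

lemma walsh_mul (i j : ℕ) (x : WG) : walsh i x * walsh j x = walsh (i ^^^ j) x := by
  set N := max i j + 1 with hN
  have hi : i < 2 ^ N := lt_of_lt_of_le (Nat.lt_two_pow_self (n := i)) (Nat.pow_le_pow_right two_pos (by omega))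
  have hj : j < 2 ^ N := lt_of_lt_of_le (Nat.lt_two_pow_self (n := j)) (Nat.pow_le_pow_right two_pos (by omega))
  rw [walsh_eq_prod i N hi x, walsh_eq_prod j N hj x,
    walsh_eq_prod (i ^^^ j) N (Nat.xor_lt_two_pow hi hj) x, ← Finset.prod_mul_distrib]
  apply Finset.prod_congr rfl
  intro k _
  rw [Nat.testBit_xor]
  cases hti : i.testBit k <;> cases htj : j.testBit k <;> simp [rade_sq]

lemma walsh_meas (n : ℕ) : Measurable (walsh n) := by
  unfold walsh
  apply Finset.measurable_prod
  intro k _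
  split
  · exact rade_meas k
  · exact measurable_const

lemma walsh_integrable (n : ℕ) : Integrable (walsh n) μG := by
  refine Integrable.mono' (integrable_const (1:ℝ)) (walsh_meas n).aestronglyMeasurable ?_
  filter_upwards with x
  rw [Real.norm_eq_abs, abs_walsh]

lemma integral_walsh (k : ℕ) : ∫ x, walsh k x ∂μG = if k = 0 then 1 else 0 := by
  split
  · next h => subst h; simp [walsh_zero]
  · next h =>
    obtain ⟨b, hb⟩ : ∃ b, k.testBit b = true := by
      by_contra hc
      push_neg at hc
      exact h (Nat.eq_of_testBit_eq fun i => by simp [Bool.eq_false_iff.2 (hc i)])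
    set t : WG := fun i => if i = b then 1 else 0 with ht
    have hb' : b ∈ Finset.range k := by
      rw [Finset.mem_range]
      exact lt_of_lt_of_le (Nat.lt_two_pow_self (n := b)) (Nat.ge_two_pow_of_testBit hb)
    have key : ∀ x : WG, walsh k (x + t) = - walsh k x := by
      intro x
      unfold walsh
      rw [← Finset.mul_prod_erase _ _ hb', ← Finset.mul_prod_erase _ _ hb', hb,
        if_pos rfl, if_pos rfl]
      have h1 : ∀ m ∈ (Finset.range k).erase b,
          (if k.testBit m then rade m (x + t) else 1) = (if k.testBit m then rade m x else 1) := by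
        intro m hm
        have hmb : m ≠ b := Finset.ne_of_mem_erase hm
        have : (x + t) m = x m := by simp [ht, hmb]
        split <;> simp [rade, this]
      rw [Finset.prod_congr rfl h1]
      have h2 : rade b (x + t) = - rade b x := by
        have hxt : (x + t) b = x b + 1 := by simp [ht]
        rw [rade, rade, hxt]
        rcases (by decide : ∀ v : ZMod 2, v = 0 ∨ v = 1) (x b) with hv | hv <;> rw [hv]
        · rw [show ((0 : ZMod 2) + 1).val = 1 from rfl, show ((0 : ZMod 2)).val = 0 from rfl]
          norm_num
        · rw [show ((1 : ZMod 2) + 1).val = 0 from rfl, show ((1 : ZMod 2)).val = 1 from rfl]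
          norm_num
      rw [h2]; ring
    have h0 := MeasureTheory.integral_add_right_eq_self (μ := μG) (walsh k) t
    simp_rw [key] at h0
    rw [integral_neg] at h0
    linarith

lemma integral_walsh_mul (i j : ℕ) :
    ∫ x, walsh i x * walsh j x ∂μG = if i = j then 1 else 0 := by
  simp_rw [walsh_mul]
  rw [integral_walsh]
  congr 1
  simp [xor_eq_zero_iff]

lemma dir_diff (a b : ℕ) (h : a ≤ b) (x : WG) :
    Dir b x - Dir a x = ∑ k ∈ Finset.Ico a b, walsh k x := by
  unfold Dir
  simp only [Finset.range_eq_Ico]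
  rw [← Finset.sum_Ico_consecutive (fun k => walsh k x) (Nat.zero_le a) h]
  ring

lemma gj_eq (a b j : ℕ) (h : a ≤ b) :
    (fun y : WG => (Dir b y - Dir a y) * walsh j y)
      = fun y => ∑ k ∈ Finset.Ico a b, walsh (k ^^^ j) y := by
  funext y
  rw [dir_diff a b h, Finset.sum_mul]
  exact Finset.sum_congr rfl fun k _ => walsh_mul k j y

lemma gj_integrable (a b j : ℕ) (h : a ≤ b) :
    Integrable (fun y : WG => (Dir b y - Dir a y) * walsh j y) μG := by
  rw [gj_eq a b j h]
  exact integrable_finset_sum _ fun k _ => walsh_integrable _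

lemma gj_integral (a b j : ℕ) (h : a ≤ b) :
    ∫ y, (Dir b y - Dir a y) * walsh j y ∂μG = if j ∈ Finset.Ico a b then 1 else 0 := by
  rw [gj_eq a b j h, integral_finset_sum _ fun k _ => walsh_integrable _]
  simp_rw [integral_walsh]
  have : ∀ k ∈ Finset.Ico a b,
      (if k ^^^ j = 0 then (1:ℝ) else 0) = (if k = j then (1:ℝ) else 0) := by
    intro k _
    congr 1
    simp [xor_eq_zero_iff]
  rw [Finset.sum_congr rfl this, Finset.sum_ite_eq' (Finset.Ico a b) j (fun _ => (1:ℝ))]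

lemma fhat_block (C : ℝ) (a b i j : ℕ) (h : a ≤ b) :
    fhat (fun z => C * ((Dir b z.1 - Dir a z.1) * (Dir b z.2 - Dir a z.2))) i j
      = C * ((if i ∈ Finset.Ico a b then (1:ℝ) else 0) *
          (if j ∈ Finset.Ico a b then (1:ℝ) else 0)) := by
  unfold fhat μ2
  have hre : (fun z : WG × WG =>
      (C * ((Dir b z.1 - Dir a z.1) * (Dir b z.2 - Dir a z.2))) * walsh i z.1 * walsh j z.2)
      = fun z : WG × WG => (fun x => C * ((Dir b x - Dir a x) * walsh i x)) z.1 *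
          (fun y => (Dir b y - Dir a y) * walsh j y) z.2 := by
    funext z; ring
  rw [hre]
  have hpm := MeasureTheory.integral_prod_mul (μ := μG) (ν := μG)
    (f := fun x => C * ((Dir b x - Dir a x) * walsh i x))
    (g := fun y => (Dir b y - Dir a y) * walsh j y)
  rw [hpm, MeasureTheory.integral_const_mul, gj_integral a b i h, gj_integral a b j h, mul_assoc]

lemma two_mul_xor_one (j : ℕ) : 2 * j ^^^ 1 = 2 * j + 1 := by
  apply Nat.eq_of_testBit_eq
  intro i
  cases i with
  | zero =>
    rw [Nat.testBit_xor]
    simp [Nat.testBit_zero, Nat.mul_add_mod, Nat.mul_mod_right]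
  | succ i =>
    rw [Nat.testBit_xor, Nat.testBit_succ, Nat.testBit_succ, Nat.testBit_succ]
    have e1 : 2 * j / 2 = j := by omega
    have e2 : (1 : ℕ) / 2 = 0 := by omega
    have e3 : (2 * j + 1) / 2 = j := by omega
    rw [e1, e2, e3, Nat.zero_testBit, Bool.xor_false]

lemma walsh_one_neg (x : WG) (hx : x 0 = 1) : walsh 1 x = -1 := by
  have : walsh 1 x = rade 0 x := by simp [walsh]
  rw [this, rade, hx, show ((1 : ZMod 2)).val = 1 from rfl, pow_one]

lemma sum_range_even (x : WG) (hx : x 0 = 1) (M : ℕ) :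
    ∑ k ∈ Finset.range (2 * M), walsh k x = 0 := by
  induction M with
  | zero => simp
  | succ M ih =>
    have h2 : 2 * (M + 1) = 2 * M + 1 + 1 := by ring
    rw [h2, Finset.sum_range_succ, Finset.sum_range_succ, ih]
    have hww : walsh (2 * M + 1) x = walsh (2 * M) x * walsh 1 x := by
      rw [← two_mul_xor_one, ← walsh_mul]
    rw [hww, walsh_one_neg x hx]
    ring

lemma sum_Ico_even_even (A B : ℕ) (h : A ≤ B) (x : WG) (hx : x 0 = 1) :
    ∑ k ∈ Finset.Ico (2 * A) (2 * B), walsh k x = 0 := by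
  rw [Finset.sum_Ico_eq_sub _ (by omega : 2 * A ≤ 2 * B),
    sum_range_even x hx, sum_range_even x hx]
  ring

lemma sum_Ico_odd (n m : ℕ) (hn : 1 ≤ n) (hm : Odd m) (h1 : 2 ^ n < m) (x : WG)
    (hx : x 0 = 1) :
    ∑ k ∈ Finset.Ico (2 ^ n) m, walsh k x = walsh (m - 1) x := by
  obtain ⟨c, rfl⟩ := hm
  have hle : 2 ^ n ≤ 2 * c := by omega
  rw [Finset.sum_Ico_succ_top hle]
  have hpow : 2 ^ n = 2 * 2 ^ (n - 1) := by
    rw [← pow_succ']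
    congr 1
    omega
  rw [hpow] at hle ⊢
  rw [sum_Ico_even_even (2 ^ (n - 1)) c (by omega) x hx]
  simp

lemma not_iset_one (x : WG) (h : x ∉ Iset 1) : x 0 = 1 := by
  have h0 : x 0 ≠ 0 := by
    intro h0
    exact h fun i hi => by
      have : i = 0 := by omega
      rw [this]; exact h0
  rcases (by decide : ∀ v : ZMod 2, v = 0 ∨ v = 1) (x 0) with hv | hv
  · exact absurd hv h0
  · exact hv

lemma meas_Sc : μG {x : WG | x 0 = 0}ᶜ = 1 / 2 := by
  set S : Set WG := {x : WG | x 0 = 0} with hSdef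
  have hS : MeasurableSet S := by
    have hm : Measurable fun x : WG => x 0 := measurable_pi_apply 0
    have hSeq : S = (fun x : WG => x 0) ⁻¹' {0} := by
      ext x; simp [hSdef]
    rw [hSeq]
    exact hm MeasurableSpace.measurableSet_top
  set e0 : WG := fun i => if i = 0 then 1 else 0 with he0
  have hpre : (fun x : WG => x + e0) ⁻¹' S = Sᶜ := by
    ext x
    simp only [Set.mem_preimage, Set.mem_compl_iff, hSdef, Set.mem_setOf_eq, Pi.add_apply]
    have he : e0 0 = 1 := by simp [he0]
    rw [he]
    exact (by decide : ∀ v : ZMod 2, (v + 1 = 0) ↔ ¬(v = 0)) (x 0)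
  have hinv : μG Sᶜ = μG S := by
    rw [← hpre]
    exact measure_preimage_add_right μG e0 S
  have htot : μG S + μG Sᶜ = 1 := by
    rw [measure_add_measure_compl hS, measure_univ]
  rw [← hinv] at htot
  have hfin : μG Sᶜ ≠ ⊤ := measure_ne_top _ _
  have h3 : (μG Sᶜ).toReal = 1 / 2 := by
    have hh := congrArg ENNReal.toReal htot
    rw [ENNReal.toReal_add hfin hfin, ENNReal.toReal_one] at hh
    linarith
  rw [← ENNReal.ofReal_toReal hfin, h3, ENNReal.ofReal_div_of_pos (by norm_num),
    ENNReal.ofReal_one, ENNReal.ofReal_ofNat]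

lemma spart_block (C : ℝ) (n m l : ℕ) (hn : 1 ≤ n) (hm : Odd m) (hl : Odd l)
    (hm1 : 2 ^ n < m) (hm2 : m < 2 ^ (n + 1)) (hl1 : 2 ^ n < l) (hl2 : l < 2 ^ (n + 1))
    (x y : WG) (hx : x 0 = 1) (hy : y 0 = 1) :
    Spart m l (fun z => C * ((Dir (2 ^ (n + 1)) z.1 - Dir (2 ^ n) z.1) *
      (Dir (2 ^ (n + 1)) z.2 - Dir (2 ^ n) z.2))) (x, y)
      = C * (walsh (m - 1) x * walsh (l - 1) y) := by
  have hab : 2 ^ n ≤ 2 ^ (n + 1) := Nat.pow_le_pow_right (by norm_num) (by omega)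
  unfold Spart
  have hfh : ∀ i j : ℕ, fhat (fun z => C * ((Dir (2 ^ (n + 1)) z.1 - Dir (2 ^ n) z.1) *
      (Dir (2 ^ (n + 1)) z.2 - Dir (2 ^ n) z.2))) i j
      = C * ((if i ∈ Finset.Ico (2 ^ n) (2 ^ (n + 1)) then (1:ℝ) else 0) *
          (if j ∈ Finset.Ico (2 ^ n) (2 ^ (n + 1)) then (1:ℝ) else 0)) :=
    fun i j => fhat_block C (2 ^ n) (2 ^ (n + 1)) i j hab
  simp only [hfh]
  have hterm : ∀ i j : ℕ,
      (C * ((if i ∈ Finset.Ico (2 ^ n) (2 ^ (n + 1)) then (1:ℝ) else 0) *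
        (if j ∈ Finset.Ico (2 ^ n) (2 ^ (n + 1)) then (1:ℝ) else 0))) * walsh i x * walsh j y
      = C * ((if i ∈ Finset.Ico (2 ^ n) (2 ^ (n + 1)) then walsh i x else 0) *
          (if j ∈ Finset.Ico (2 ^ n) (2 ^ (n + 1)) then walsh j y else 0)) := by
    intro i j
    split_ifs <;> ring
  simp only [hterm]
  have hx1 : ∑ i ∈ Finset.range m,
      (if i ∈ Finset.Ico (2 ^ n) (2 ^ (n + 1)) then walsh i x else 0) = walsh (m - 1) x := by
    rw [Finset.sum_ite_mem, Finset.range_eq_Ico, Finset.Ico_inter_Ico,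
      max_eq_right (Nat.zero_le _), min_eq_left (le_of_lt hm2)]
    exact sum_Ico_odd n m hn hm hm1 x hx
  have hy1 : ∑ j ∈ Finset.range l,
      (if j ∈ Finset.Ico (2 ^ n) (2 ^ (n + 1)) then walsh j y else 0) = walsh (l - 1) y := by
    rw [Finset.sum_ite_mem, Finset.range_eq_Ico, Finset.Ico_inter_Ico,
      max_eq_right (Nat.zero_le _), min_eq_left (le_of_lt hl2)]
    exact sum_Ico_odd n l hn hl hl1 y hy
  simp_rw [← Finset.mul_sum]
  rw [← Finset.sum_mul, hx1, hy1]

lemma ofReal_quarter : (ENNReal.ofReal (1/4 : ℝ)) = (1/4 : ℝ≥0∞) := by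
  rw [ENNReal.ofReal_div_of_pos (by norm_num), ENNReal.ofReal_one, ENNReal.ofReal_ofNat]

lemma meas_quarter : μ2 ({x : WG | x 0 = 0}ᶜ ×ˢ {x : WG | x 0 = 0}ᶜ) = ENNReal.ofReal (1/4 : ℝ) := by
  unfold μ2
  rw [Measure.prod_prod, meas_Sc,
    show (1/2 : ℝ≥0∞) = ENNReal.ofReal (1/2) from by
      rw [ENNReal.ofReal_div_of_pos (by norm_num), ENNReal.ofReal_one, ENNReal.ofReal_ofNat],
    ← ENNReal.ofReal_mul (by norm_num)]
  norm_num

theorem single_block_lower (p : ℝ) (hp0 : 0 < p) (hp1 : p < 1) (n : ℕ) (hn : 2 ≤ n)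
    (f : WG × WG → ℝ)
    (hf : f = fun z => (2 : ℝ) ^ ((n : ℝ) * (2 / p - 2)) *
      ((Dir (2 ^ (n + 1)) z.1 - Dir (2 ^ n) z.1) * (Dir (2 ^ (n + 1)) z.2 - Dir (2 ^ n) z.2))) :
    (∀ m l : ℕ, Odd m → Odd l → 2 ^ n < m → m < 2 ^ (n + 1) → 2 ^ n < l → l < 2 ^ (n + 1) →
      ∀ x y : WG, x ∉ Iset 1 → y ∉ Iset 1 →
        |Spart m l f (x, y)| = (2 : ℝ) ^ ((n : ℝ) * (2 / p - 2))) ∧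
    ∃ c : ℝ, 0 < c ∧
      ∀ m l : ℕ, Odd m → Odd l → 2 ^ n < m → m < 2 ^ (n + 1) → 2 ^ n < l → l < 2 ^ (n + 1) →
        ENNReal.ofReal (c * (2 : ℝ) ^ ((n : ℝ) * (2 / p - 2))) ≤ wLp p (Spart m l f) := by
  have hC : (0:ℝ) < (2 : ℝ) ^ ((n : ℝ) * (2 / p - 2)) := Real.rpow_pos_of_pos two_pos _
  set C := (2 : ℝ) ^ ((n : ℝ) * (2 / p - 2)) with hCdef
  have P1 : ∀ m l : ℕ, Odd m → Odd l → 2 ^ n < m → m < 2 ^ (n + 1) → 2 ^ n < l → l < 2 ^ (n + 1) →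
      ∀ x y : WG, x ∉ Iset 1 → y ∉ Iset 1 → |Spart m l f (x, y)| = C := by
    intro m l hm hl hm1 hm2 hl1 hl2 x y hx hy
    have hx1 := not_iset_one x hx
    have hy1 := not_iset_one y hy
    rw [hf, spart_block C n m l (by omega) hm hl hm1 hm2 hl1 hl2 x y hx1 hy1,
      abs_mul, abs_mul, abs_walsh, abs_walsh, abs_of_pos hC]
    ring
  refine ⟨P1, (1/2) * (1/4 : ℝ) ^ ((1:ℝ)/p), by positivity, ?_⟩
  intro m l hm hl hm1 hm2 hl1 hl2
  have hsub : ({x : WG | x 0 = 0}ᶜ ×ˢ {x : WG | x 0 = 0}ᶜ)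
      ⊆ {z : WG × WG | (((C/2).toNNReal : ℝ≥0) : ℝ) < |Spart m l f z|} := by
    rintro ⟨x, y⟩ ⟨hxm, hym⟩
    simp only [Set.mem_setOf_eq]
    have hx' : x ∉ Iset 1 := fun hmem => hxm (show x 0 = 0 from hmem 0 Nat.one_pos)
    have hy' : y ∉ Iset 1 := fun hmem => hym (show y 0 = 0 from hmem 0 Nat.one_pos)
    rw [Real.coe_toNNReal _ (by positivity), P1 m l hm hl hm1 hm2 hl1 hl2 x y hx' hy']
    linarith
  have hmono := measure_mono (μ := μ2) hsub
  rw [meas_quarter] at hmono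
  have hle : (((C/2).toNNReal : ℝ≥0) : ℝ≥0∞) *
      (μ2 {z | (((C/2).toNNReal : ℝ≥0) : ℝ) < |Spart m l f z|}) ^ ((1:ℝ)/p)
      ≤ wLp p (Spart m l f) :=
    le_iSup (fun t : ℝ≥0 => (t : ℝ≥0∞) * (μ2 {z | (t : ℝ) < |Spart m l f z|}) ^ (1/p))
      ((C/2).toNNReal)
  refine le_trans ?_ hle
  have hcoe : (((C/2).toNNReal : ℝ≥0) : ℝ≥0∞) = ENNReal.ofReal (C/2) := rfl
  rw [hcoe, show (1/2 * (1/4 : ℝ) ^ ((1:ℝ)/p)) * C = (C/2) * ((1/4 : ℝ) ^ ((1:ℝ)/p)) from by ring,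
    ENNReal.ofReal_mul (by positivity)]
  apply mul_le_mul_right
  rw [← ENNReal.ofReal_rpow_of_pos (by norm_num : (0:ℝ) < 1/4)]
  exact ENNReal.rpow_le_rpow hmono (le_of_lt (by positivity))


end
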